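/- Fix m ≥ 0 and a natural number w with a_m ≤ w < a_{m+1}, where a_0 = 0 and a_{m+1} = 2·3^m. Define, for pegs k ∈ {0,1,2}, the sequence d_{n,k} by d_{0,k} = 0 and the weighted Hanoi min-recurrence with weights w_{n,0} = 1 = w_{n,2}, w_{n,1} = w: d_{n+1,0} = min{ d_{n,1} + d_{n,2} + 1, 3·d_{n,0} + w + 1 }, d_{n+1,1} = min{ d_{n,0} + d_{n,2} + w, 3·d_{n,1} + 2 }, d_{n+1,2} = min{ d_{n,0} + d_{n,1} + 1, 3·d_{n,2} + w + 1 }. Then d_{n,0} = d_{n,2} for all n, and: (i) for 0 ≤ n ≤ m, d_n = (N_n, 2·N_n, N_n) with N_n = (3^n − 1)/2; (ii) for n > m, d_{n,0} = d_{n,2} = N_m·J_{n−m+2} + ℓ_{n−m} + w·ℓ_{n−m−1} and d_{n,1} = 2·N_m·J_{n−m+1} + 2·ℓ_{n−m−1} + 2·w·ℓ_{n−m−2} + w, where J_ν = (2^ν − (−1)^ν)/3 is the Jacobsthal sequence and ℓ_ν = Σ_{μ=0}^{ν} J_μ is the Lichtenberg sequence (with ℓ_{−1} = 0). -/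

import Mathlib

/-- The Jacobsthal numbers: `J n = (2^n - (-1)^n)/3` (exact integer division). -/
def jacobsthal (n : ℕ) : ℤ := (2 ^ n - (-1) ^ n) / 3

/-- `lichtenbergPred n = ℓ_{n-1} = ∑_{ν=0}^{n-1} J_ν`, so `lichtenbergPred 0 = ℓ_{-1} = 0`
and `lichtenbergPred (k+1) = ℓ_k`. -/
def lichtenbergPred (n : ℕ) : ℤ := ∑ ν ∈ Finset.range n, jacobsthal ν

/-- `N n = (3^n - 1)/2` (exact integer division). -/
def Nseq (n : ℕ) : ℤ := (3 ^ n - 1) / 2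

/-- The threshold sequence: `a 0 = 0`, `a (m+1) = 2 * 3^m`. -/
def threshold : ℕ → ℕ
  | 0 => 0
  | m + 1 => 2 * 3 ^ m

/-!
All three components stay in the symmetric form `(a, b, a)`. While `2·3^n ≤ w` the minima are
attained at `a + b + 1` and `3b + 2`, so `(N n, 2 N n)` is mapped to `(N (n+1), 2 N (n+1))`.
From `n = m` on they are attained at `a + b + 1` and `2a + w`: the invariant
`0 ≤ b ≤ 2a + w ≤ 3b + 2`, which selects exactly these branches, holds at `(N m, 2 N m)` because
`w < 2·3^m`, and is preserved by the affine map `(a, b) ↦ (a + b + 1, 2a + w)`. Its linear part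
has characteristic polynomial `x² - x - 2`, whence the Jacobsthal numbers.
-/

lemma three_mul_jacobsthal (n : ℕ) : 3 * jacobsthal n = 2 ^ n - (-1) ^ n := by
  refine Int.mul_ediv_cancel' ?_
  induction n with
  | zero => norm_num
  | succ k ih =>
    obtain ⟨c, hc⟩ := ih
    exact ⟨2 * c + (-1) ^ k, by linear_combination 2 * hc⟩

lemma jacobsthal_add_two (n : ℕ) :
    jacobsthal (n + 2) = jacobsthal (n + 1) + 2 * jacobsthal n := by
  have h := three_mul_jacobsthal n
  have h1 := three_mul_jacobsthal (n + 1)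
  have h2 := three_mul_jacobsthal (n + 2)
  have e : (2 : ℤ) ^ (n + 2) - (-1) ^ (n + 2)
      = 2 ^ (n + 1) - (-1) ^ (n + 1) + 2 * (2 ^ n - (-1) ^ n) := by ring
  linarith

lemma lichtenbergPred_succ (n : ℕ) :
    lichtenbergPred (n + 1) = lichtenbergPred n + jacobsthal n :=
  Finset.sum_range_succ _ _

lemma jacobsthal_succ (n : ℕ) : jacobsthal (n + 1) = 2 * lichtenbergPred n + 1 := by
  induction n with
  | zero => decide
  | succ k ih =>
    rw [jacobsthal_add_two, ih, lichtenbergPred_succ]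
    ring

lemma lichtenbergPred_add_two (n : ℕ) :
    lichtenbergPred (n + 2) = lichtenbergPred (n + 1) + 2 * lichtenbergPred n + 1 := by
  rw [lichtenbergPred_succ, jacobsthal_succ]
  ring

lemma two_mul_Nseq (n : ℕ) : 2 * Nseq n = 3 ^ n - 1 := by
  refine Int.mul_ediv_cancel' ?_
  induction n with
  | zero => norm_num
  | succ k ih =>
    obtain ⟨c, hc⟩ := ih
    exact ⟨3 * c + 1, by linear_combination 3 * hc⟩

lemma Nseq_succ (n : ℕ) : Nseq (n + 1) = 3 * Nseq n + 1 := by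
  have h := two_mul_Nseq n
  have h1 := two_mul_Nseq (n + 1)
  rw [pow_succ] at h1
  linarith

lemma Nseq_nonneg (n : ℕ) : 0 ≤ Nseq n := by
  have h := two_mul_Nseq n
  have h1 : (1 : ℤ) ≤ 3 ^ n := one_le_pow₀ (by norm_num)
  linarith

lemma two_mul_pow_le_threshold {n m : ℕ} (h : n < m) : 2 * 3 ^ n ≤ threshold m := by
  obtain ⟨k, rfl⟩ := Nat.exists_eq_add_of_lt h
  exact Nat.mul_le_mul_left 2 (Nat.pow_le_pow_right (by norm_num) (by omega))

/-- The profiles `(a, b, a)` on which the recurrence acts as `(a, b) ↦ (a + b + 1, 2a + w)`. -/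
def PostInvariant (w a b : ℤ) : Prop :=
  0 ≤ b ∧ b ≤ 2 * a + w ∧ 2 * a + w ≤ 3 * b + 2

lemma PostInvariant.step {w a b : ℤ} (h : PostInvariant w a b) :
    PostInvariant w (a + b + 1) (2 * a + w) := by
  obtain ⟨hb, hba, hab⟩ := h
  exact ⟨by linarith, by linarith, by linarith⟩

/-- The value of `d (m + s + 1) 0 = d (m + s + 1) 2`, with `N = N m`. -/
def postA (N w : ℤ) (s : ℕ) : ℤ :=
  N * jacobsthal (s + 3) + lichtenbergPred (s + 2) + w * lichtenbergPred (s + 1)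

/-- The value of `d (m + s + 1) 1`, with `N = N m`. -/
def postB (N w : ℤ) (s : ℕ) : ℤ :=
  2 * N * jacobsthal (s + 2) + 2 * lichtenbergPred (s + 1) + 2 * w * lichtenbergPred s + w

lemma postA_zero (N w : ℤ) : postA N w 0 = N + 2 * N + 1 := by
  have hJ : jacobsthal 3 = 3 := by decide
  have hl2 : lichtenbergPred 2 = 1 := by decide
  have hl1 : lichtenbergPred 1 = 0 := by decide
  simp only [postA, hJ, hl2, hl1]
  ring

lemma postB_zero (N w : ℤ) : postB N w 0 = 2 * N + w := by
  have hJ : jacobsthal 2 = 1 := by decide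
  have hl1 : lichtenbergPred 1 = 0 := by decide
  have hl0 : lichtenbergPred 0 = 0 := by decide
  simp only [postB, hJ, hl1, hl0]
  ring

lemma postA_succ (N w : ℤ) (s : ℕ) : postA N w (s + 1) = postA N w s + postB N w s + 1 := by
  simp only [postA, postB]
  linear_combination N * jacobsthal_add_two (s + 2) + lichtenbergPred_add_two (s + 1)
    + w * lichtenbergPred_add_two s

lemma postB_succ (N w : ℤ) (s : ℕ) : postB N w (s + 1) = 2 * postA N w s + w := by
  simp only [postA, postB]
  ring

section Recurrence

variable {w : ℤ} {d : ℕ → Fin 3 → ℤ}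
  (hrec0 : ∀ n, d (n + 1) 0 = min (d n 1 + d n 2 + 1) (3 * d n 0 + w + 1))
  (hrec1 : ∀ n, d (n + 1) 1 = min (d n 0 + d n 2 + w) (3 * d n 1 + 2))
  (hrec2 : ∀ n, d (n + 1) 2 = min (d n 0 + d n 1 + 1) (3 * d n 2 + w + 1))
include hrec0 hrec1 hrec2

lemma hanoi_succ_of_symm {n : ℕ} {a b : ℤ} (hn : d n = ![a, b, a]) :
    d (n + 1) = ![min (a + b + 1) (3 * a + w + 1), min (2 * a + w) (3 * b + 2),
      min (a + b + 1) (3 * a + w + 1)] := by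
  funext k
  fin_cases k
  · simp [hrec0, hn, add_comm a b]
  · simp [hrec1, hn, two_mul]
  · simp [hrec2, hn]

lemma hanoi_eq_Nseq {m : ℕ} (h0 : ∀ k, d 0 k = 0) (hw : (threshold m : ℤ) ≤ w) :
    ∀ n ≤ m, d n = ![Nseq n, 2 * Nseq n, Nseq n] := by
  intro n hn
  induction n with
  | zero =>
    funext k
    fin_cases k <;> simp [h0, Nseq]
  | succ n ih =>
    have hwn : 2 * 3 ^ n ≤ w :=
      le_trans (by exact_mod_cast two_mul_pow_le_threshold (by omega : n < m)) hw
    have h2N := two_mul_Nseq n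
    have hN : Nseq (n + 1) = Nseq n + 2 * Nseq n + 1 := by rw [Nseq_succ]; ring
    have h2N' : 2 * Nseq (n + 1) = 3 * (2 * Nseq n) + 2 := by rw [Nseq_succ]; ring
    rw [hanoi_succ_of_symm hrec0 hrec1 hrec2 (ih (by omega)), h2N', hN,
      min_eq_left (by linarith), min_eq_right (by linarith)]

lemma hanoi_succ_of_postInvariant {n : ℕ} {a b : ℤ} (hn : d n = ![a, b, a])
    (hinv : PostInvariant w a b) : d (n + 1) = ![a + b + 1, 2 * a + w, a + b + 1] := by
  obtain ⟨hb, hba, hab⟩ := hinv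
  rw [hanoi_succ_of_symm hrec0 hrec1 hrec2 hn, min_eq_left (by linarith),
    min_eq_left (by linarith)]

lemma hanoi_eq_post {m : ℕ} {N : ℤ} (hm : d m = ![N, 2 * N, N])
    (hN : PostInvariant w N (2 * N)) (s : ℕ) :
    d (m + s + 1) = ![postA N w s, postB N w s, postA N w s] ∧
      PostInvariant w (postA N w s) (postB N w s) := by
  induction s with
  | zero =>
    rw [postA_zero, postB_zero]
    exact ⟨hanoi_succ_of_postInvariant hrec0 hrec1 hrec2 hm hN, hN.step⟩
  | succ s ih =>
    rw [postA_succ, postB_succ, ← add_assoc]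
    exact ⟨hanoi_succ_of_postInvariant hrec0 hrec1 hrec2 ih.1 ih.2, ih.2.step⟩

end Recurrence

theorem stmt19 (m : ℕ) (w : ℕ)
    (hw1 : threshold m ≤ w) (hw2 : w < threshold (m + 1))
    (d : ℕ → Fin 3 → ℤ)
    (h0 : ∀ k, d 0 k = 0)
    (hrec0 : ∀ n, d (n + 1) 0 = min (d n 1 + d n 2 + 1) (3 * d n 0 + (w : ℤ) + 1))
    (hrec1 : ∀ n, d (n + 1) 1 = min (d n 0 + d n 2 + (w : ℤ)) (3 * d n 1 + 2))
    (hrec2 : ∀ n, d (n + 1) 2 = min (d n 0 + d n 1 + 1) (3 * d n 2 + (w : ℤ) + 1)) :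
    (∀ n : ℕ, d n 0 = d n 2) ∧
    (∀ n ≤ m, d n 0 = Nseq n ∧ d n 1 = 2 * Nseq n ∧ d n 2 = Nseq n) ∧
    (∀ n : ℕ, m < n →
      (d n 0 = Nseq m * jacobsthal (n - m + 2) + lichtenbergPred (n - m + 1)
          + (w : ℤ) * lichtenbergPred (n - m) ∧
       d n 2 = Nseq m * jacobsthal (n - m + 2) + lichtenbergPred (n - m + 1)
          + (w : ℤ) * lichtenbergPred (n - m) ∧
       d n 1 = 2 * Nseq m * jacobsthal (n - m + 1) + 2 * lichtenbergPred (n - m)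
          + 2 * (w : ℤ) * lichtenbergPred (n - m - 1) + (w : ℤ))) := by
  have pre := hanoi_eq_Nseq hrec0 hrec1 hrec2 h0 (by exact_mod_cast hw1)
  have hinv : PostInvariant w (Nseq m) (2 * Nseq m) := by
    have hw : (w : ℤ) < 2 * 3 ^ m := by exact_mod_cast hw2
    have := two_mul_Nseq m
    refine ⟨by linarith [Nseq_nonneg m], by linarith [Int.natCast_nonneg w], by linarith⟩
  have post := hanoi_eq_post hrec0 hrec1 hrec2 (pre m le_rfl) hinv
  refine ⟨fun n => ?_, fun n hn => by simp [pre n hn], fun n hn => ?_⟩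
  · rcases le_or_gt n m with hn | hn
    · simp [pre n hn]
    · obtain ⟨s, rfl⟩ := Nat.exists_eq_add_of_lt hn
      simp [(post s).1]
  · obtain ⟨s, rfl⟩ := Nat.exists_eq_add_of_lt hn
    have hs : m + s + 1 - m = s + 1 := by omega
    simp only [(post s).1, hs, Nat.add_sub_cancel]
    exact ⟨rfl, rfl, rfl⟩
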